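/- arXiv:1705.01309 — 5 statements merged into one kernel-verified Lean document; each statement's English description precedes it below -/
import Mathlib

section
/- Let d ≥ 1 be an integer and γ ∈ (-d, 0). Then there exist constants C₁, C₂ > 0, depending only on γ and d, such that for every v ∈ ℝ^d one has C₁ (1+|v|)^γ ≤ Σ_γ(v) ≤ C₂ (1+|v|)^γ, where Σ_γ(v) = ∫_{ℝ^d} |v-v_*|^γ M(v_*) dv_*. -/
/-!
Where `v_*` is close to `v`, the kernel `|v - v_*|^γ` is integrable because `γ > -d`; elsewhere it
is at most `1`. So convolving the kernel with a bounded integrable function gives a function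
bounded uniformly in `v`. The lower bound comes from integrating over the unit ball, where
`|v - v_*| ≤ 1 + |v|`. For the upper bound, the Peetre-type inequality
`|x|^γ ≤ 2^{-γ} (1 + |v|)^γ (1 + |v_*|)^{-γ} (1 + |x|^γ)` for `x = v - v_*` moves the weight
onto the Maxwellian, and `(1 + |v_*|)^{-γ} M(v_*)` is still bounded by a Gaussian.
-/

open MeasureTheory Real
open scoped ENNReal RealInnerProductSpace

noncomputable section

abbrev Rd (d : ℕ) := EuclideanSpace ℝ (Fin d)

/-- The normalized Maxwellian `M(v) = (2π)^{-d/2} exp(-|v|²/2)`. -/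
def Maxw (d : ℕ) (v : Rd d) : ℝ := (2 * π) ^ (-(d : ℝ) / 2) * Real.exp (-‖v‖ ^ 2 / 2)

/-- The surface measure on the unit sphere of `ℝ^d`. -/
def sphereMeas (d : ℕ) : Measure (Metric.sphere (0 : Rd d) 1) :=
  (volume : Measure (Rd d)).toSphere

/-- post-collisional velocity `v' = (v+v_*)/2 + (|v-v_*|/2)σ`. -/
def vpr (d : ℕ) (v vs σ : Rd d) : Rd d := (2 : ℝ)⁻¹ • (v + vs) + (‖v - vs‖ / 2) • σ

/-- post-collisional velocity `v_*' = (v+v_*)/2 - (|v-v_*|/2)σ`. -/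
def vspr (d : ℕ) (v vs σ : Rd d) : Rd d := (2 : ℝ)⁻¹ • (v + vs) - (‖v - vs‖ / 2) • σ

/-- `cos θ = ((v-v_*)/|v-v_*|) · σ`. -/
def cosTheta (d : ℕ) (v vs σ : Rd d) : ℝ := ⟪‖v - vs‖⁻¹ • (v - vs), σ⟫

/-- The angular kernel: even, nonnegative, measurable, normalized on the sphere. -/
def IsAngKernel (d : ℕ) (b : ℝ → ℝ) : Prop :=
  Measurable b ∧ (∀ x, 0 ≤ b x) ∧ (∀ x, b (-x) = b x) ∧
    ∀ e : Rd d, ‖e‖ = 1 →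
      (∫ σ : Metric.sphere (0 : Rd d) 1, b ⟪e, (σ : Rd d)⟫ ∂(sphereMeas d)) = 1

/-- The collision frequency `Σ_α(v) = ∫ |v-v_*|^α M(v_*) dv_*`. -/
def collFreq (d : ℕ) (α : ℝ) (v : Rd d) : ℝ := ∫ vs : Rd d, ‖v - vs‖ ^ α * Maxw d vs

/-- The gain operator `K_α f(v)`. -/
def gainOp (d : ℕ) (b : ℝ → ℝ) (α : ℝ) (f : Rd d → ℝ) (v : Rd d) : ℝ :=
  ∫ vs : Rd d, ∫ σ : Metric.sphere (0 : Rd d) 1,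
    ‖v - vs‖ ^ α * b (cosTheta d v vs σ) * f (vpr d v vs σ) * Maxw d (vspr d v vs σ)
      ∂(sphereMeas d)

/-- The entropy production `D_α(f)`, as an element of `[0,∞]`. -/
def entProd (d : ℕ) (b : ℝ → ℝ) (α : ℝ) (f : Rd d → ℝ) : ℝ≥0∞ :=
  2⁻¹ * ∫⁻ v : Rd d, ∫⁻ vs : Rd d, ∫⁻ σ : Metric.sphere (0 : Rd d) 1,
    ENNReal.ofReal (‖v - vs‖ ^ α * b (cosTheta d v vs σ) * Maxw d v * Maxw d vs *
      ((f (vpr d v vs σ) / Maxw d (vpr d v vs σ) - f v / Maxw d v) *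
        Real.log ((f (vpr d v vs σ) / Maxw d (vpr d v vs σ)) / (f v / Maxw d v))))
      ∂(sphereMeas d)

/-- The relative entropy `H(f|M) = ∫ f log (f/M)`. -/
def relEnt (d : ℕ) (f : Rd d → ℝ) : ℝ := ∫ v : Rd d, f v * Real.log (f v / Maxw d v)

/-- `⟨v⟩ = (1+|v|²)^{1/2}`. -/
def jap (d : ℕ) (v : Rd d) : ℝ := Real.sqrt (1 + ‖v‖ ^ 2)

/-- A solution of the linear Boltzmann equation with initial datum `f₀`. -/
def IsSolution (d : ℕ) (b : ℝ → ℝ) (γ : ℝ) (f : ℝ → Rd d → ℝ) (f₀ : Rd d → ℝ) : Prop :=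
  f 0 = f₀ ∧
  (∀ t : ℝ, 0 ≤ t → Integrable (f t) ∧ (∀ v, 0 ≤ f t v) ∧ (∫ v : Rd d, f t v) = 1) ∧
  ∀ᵐ v : Rd d, ∀ t : ℝ, 0 ≤ t →
    HasDerivWithinAt (fun s => f s v)
      (gainOp d b γ (f t) v - collFreq d γ v * f t v) (Set.Ici 0) t

open Metric Set Filter

lemma rpow_norm_le_indicator_ball_add_one {F : Type*} [SeminormedAddCommGroup F] {γ : ℝ}
    (hγ : γ ≤ 0) (x : F) :
    ‖x‖ ^ γ ≤ (ball 0 1).indicator (‖·‖ ^ γ) x + 1 := by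
  by_cases hx : x ∈ ball (0 : F) 1
  · simp [indicator_of_mem hx]
  · rw [indicator_of_notMem hx, zero_add]
    exact Real.rpow_le_one_of_one_le_of_nonpos (by simpa using hx) hγ

lemma rpow_norm_sub_mul_le {F : Type*} [SeminormedAddCommGroup F] {γ B : ℝ} {h : F → ℝ}
    (hγ : γ ≤ 0) (h0 : ∀ w, 0 ≤ h w) (hB : ∀ w, h w ≤ B) (v w : F) :
    ‖v - w‖ ^ γ * h w ≤ B * (ball 0 1).indicator (‖·‖ ^ γ) (v - w) + h w := by
  have hind : 0 ≤ (ball (0 : F) 1).indicator (‖·‖ ^ γ) (v - w) :=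
    indicator_nonneg (fun x _ => Real.rpow_nonneg (norm_nonneg x) γ) _
  calc ‖v - w‖ ^ γ * h w
      ≤ ((ball 0 1).indicator (‖·‖ ^ γ) (v - w) + 1) * h w :=
        mul_le_mul_of_nonneg_right (rpow_norm_le_indicator_ball_add_one hγ _) (h0 w)
    _ ≤ B * (ball 0 1).indicator (‖·‖ ^ γ) (v - w) + h w := by
        nlinarith [mul_le_mul_of_nonneg_left (hB w) hind]

section ConvolutionWithRpowNorm

variable {E : Type*} [NormedAddCommGroup E] [NormedSpace ℝ E] [FiniteDimensional ℝ E]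
  [MeasurableSpace E] [BorelSpace E] {μ : Measure E} [μ.IsAddHaarMeasure] {γ : ℝ}

lemma integrable_indicator_ball_rpow_norm (hγ : γ ≤ 0)
    (hγd : -(Module.finrank ℝ E : ℝ) < γ) :
    Integrable ((ball (0 : E) 1).indicator (‖·‖ ^ γ)) μ := by
  have hd : 1 ≤ Module.finrank ℝ E := by
    exact_mod_cast (show (0 : ℝ) < Module.finrank ℝ E by linarith)
  refine (integrable_indicator_iff measurableSet_ball).2 <|
    integrableOn_ball_of_norm_le_rpow hd (C := 1) (α := -γ) (by linarith)
      (ae_of_all _ fun x => ?_) (measurable_norm.pow_const γ).aestronglyMeasurable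
  simp [abs_of_nonneg (Real.rpow_nonneg (norm_nonneg x) γ)]

variable {h : E → ℝ} {B : ℝ}

lemma integrable_rpow_norm_sub_mul (hγ : γ ≤ 0) (hγd : -(Module.finrank ℝ E : ℝ) < γ)
    (hh : Integrable h μ) (h0 : ∀ w, 0 ≤ h w) (hB : ∀ w, h w ≤ B) (v : E) :
    Integrable (fun w => ‖v - w‖ ^ γ * h w) μ := by
  refine Integrable.mono'
    ((((integrable_indicator_ball_rpow_norm hγ hγd).comp_sub_left v).const_mul B).add hh)
    ((by fun_prop : Measurable fun w : E => ‖v - w‖ ^ γ).aestronglyMeasurable.mul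
      hh.aestronglyMeasurable) (ae_of_all _ fun w => ?_)
  rw [Real.norm_of_nonneg (mul_nonneg (Real.rpow_nonneg (norm_nonneg _) γ) (h0 w))]
  exact rpow_norm_sub_mul_le hγ h0 hB v w

lemma integral_rpow_norm_sub_mul_le (hγ : γ ≤ 0) (hγd : -(Module.finrank ℝ E : ℝ) < γ)
    (hh : Integrable h μ) (h0 : ∀ w, 0 ≤ h w) (hB : ∀ w, h w ≤ B) (v : E) :
    ∫ w, ‖v - w‖ ^ γ * h w ∂μ ≤ B * ∫ x in ball 0 1, ‖x‖ ^ γ ∂μ + ∫ w, h w ∂μ := by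
  have hind := ((integrable_indicator_ball_rpow_norm hγ hγd).comp_sub_left (μ := μ) v).const_mul B
  calc ∫ w, ‖v - w‖ ^ γ * h w ∂μ
      ≤ ∫ w, (B * (ball 0 1).indicator (‖·‖ ^ γ) (v - w) + h w) ∂μ :=
        integral_mono (integrable_rpow_norm_sub_mul hγ hγd hh h0 hB v) (hind.add hh)
          (rpow_norm_sub_mul_le hγ h0 hB v)
    _ = B * ∫ x in ball 0 1, ‖x‖ ^ γ ∂μ + ∫ w, h w ∂μ := by
        rw [integral_add hind hh, integral_const_mul,
          integral_sub_left_eq_self (fun x => (ball (0 : E) 1).indicator (‖·‖ ^ γ) x) μ v,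
          integral_indicator measurableSet_ball]

end ConvolutionWithRpowNorm

lemma rpow_le_two_rpow_mul_one_add_rpow {a γ : ℝ} (ha : 0 ≤ a) (hγ : γ ≤ 0) :
    a ^ γ ≤ 2 ^ (-γ) * (1 + a) ^ γ * (1 + a ^ γ) := by
  have h2 : (2 : ℝ) ^ (-γ) * 2 ^ γ = 1 := by
    rw [← Real.rpow_add two_pos, neg_add_cancel, Real.rpow_zero]
  have hapos : 0 ≤ a ^ γ := Real.rpow_nonneg ha γ
  have h2pos : 0 ≤ (2 : ℝ) ^ (-γ) := Real.rpow_nonneg zero_le_two _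
  rcases le_total a 1 with ha1 | ha1
  · have : (2 : ℝ) ^ γ ≤ (1 + a) ^ γ :=
      Real.rpow_le_rpow_of_nonpos (by linarith) (by linarith) hγ
    nlinarith [mul_le_mul_of_nonneg_left this h2pos]
  · have : (2 * a) ^ γ ≤ (1 + a) ^ γ :=
      Real.rpow_le_rpow_of_nonpos (by linarith) (by linarith) hγ
    rw [Real.mul_rpow zero_le_two ha] at this
    have key : a ^ γ ≤ 2 ^ (-γ) * (1 + a) ^ γ := by
      nlinarith [mul_le_mul_of_nonneg_left this h2pos]
    nlinarith [Real.rpow_nonneg (show (0 : ℝ) ≤ 1 + a by linarith) γ]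

lemma one_add_rpow_le_exp {p b : ℝ} (hp : 0 ≤ p) (hb : 0 ≤ b) :
    (1 + b) ^ p ≤ exp (p ^ 2 + b ^ 2 / 4) :=
  calc (1 + b) ^ p ≤ exp b ^ p :=
        Real.rpow_le_rpow (by linarith) (by linarith [add_one_le_exp b]) hp
    _ = exp (b * p) := (exp_mul b p).symm
    _ ≤ exp (p ^ 2 + b ^ 2 / 4) := exp_le_exp.2 (by nlinarith [sq_nonneg (p - b / 2)])

lemma one_add_norm_sub_rpow_le {F : Type*} [SeminormedAddCommGroup F] {γ : ℝ} (hγ : γ ≤ 0)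
    (v w : F) : (1 + ‖v - w‖) ^ γ ≤ (1 + ‖v‖) ^ γ * (1 + ‖w‖) ^ (-γ) := by
  have ha : 0 < 1 + ‖v - w‖ := by positivity
  have hb : 0 < 1 + ‖w‖ := by positivity
  have htri : 1 + ‖v‖ ≤ (1 + ‖v - w‖) * (1 + ‖w‖) := by
    nlinarith [norm_le_norm_sub_add v w, mul_nonneg (norm_nonneg (v - w)) (norm_nonneg w)]
  calc (1 + ‖v - w‖) ^ γ = ((1 + ‖v - w‖) * (1 + ‖w‖)) ^ γ * (1 + ‖w‖) ^ (-γ) := by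
        rw [Real.mul_rpow ha.le hb.le, mul_assoc, ← Real.rpow_add hb, add_neg_cancel,
          Real.rpow_zero, mul_one]
    _ ≤ (1 + ‖v‖) ^ γ * (1 + ‖w‖) ^ (-γ) :=
        mul_le_mul_of_nonneg_right (Real.rpow_le_rpow_of_nonpos (by positivity) htri hγ)
          (Real.rpow_nonneg hb.le _)

lemma norm_sub_rpow_le {F : Type*} [SeminormedAddCommGroup F] {γ : ℝ} (hγ : γ ≤ 0) (v w : F) :
    ‖v - w‖ ^ γ ≤ 2 ^ (-γ) * (1 + ‖v‖) ^ γ * ((1 + ‖w‖) ^ (-γ) * (1 + ‖v - w‖ ^ γ)) :=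
  calc ‖v - w‖ ^ γ ≤ 2 ^ (-γ) * (1 + ‖v - w‖) ^ γ * (1 + ‖v - w‖ ^ γ) :=
        rpow_le_two_rpow_mul_one_add_rpow (norm_nonneg _) hγ
    _ ≤ 2 ^ (-γ) * ((1 + ‖v‖) ^ γ * (1 + ‖w‖) ^ (-γ)) * (1 + ‖v - w‖ ^ γ) := by
        have := one_add_norm_sub_rpow_le hγ v w
        have := Real.rpow_nonneg (norm_nonneg (v - w)) γ
        gcongr
    _ = _ := by ring

lemma integrable_exp_neg_mul_sq_norm {V : Type*} [NormedAddCommGroup V] [InnerProductSpace ℝ V]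
    [FiniteDimensional ℝ V] [MeasurableSpace V] [BorelSpace V] {b : ℝ} (hb : 0 < b) :
    Integrable (fun v : V => exp (-b * ‖v‖ ^ 2)) :=
  Integrable.of_integral_ne_zero <| by
    rw [GaussianFourier.integral_rexp_neg_mul_sq_norm hb]
    exact (Real.rpow_pos_of_pos (div_pos pi_pos hb) _).ne'

section Maxwellian

variable {d : ℕ}

lemma maxw_pos (v : Rd d) : 0 < Maxw d v := by
  unfold Maxw
  have := pi_pos
  positivity

lemma maxw_le (v : Rd d) : Maxw d v ≤ (2 * π) ^ (-(d : ℝ) / 2) :=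
  mul_le_of_le_one_right (by have := pi_pos; positivity)
    (exp_le_one_iff.2 (by nlinarith [sq_nonneg ‖v‖]))

lemma integrable_maxw : Integrable (Maxw d) :=
  ((integrable_exp_neg_mul_sq_norm (V := Rd d) (b := 1 / 2) (by norm_num)).const_mul
    ((2 * π) ^ (-(d : ℝ) / 2))).congr (ae_of_all _ fun v => by unfold Maxw; ring_nf)

lemma maxw_ge_of_norm_le_one {v : Rd d} (hv : ‖v‖ ≤ 1) :
    (2 * π) ^ (-(d : ℝ) / 2) * exp (-1 / 2) ≤ Maxw d v :=
  mul_le_mul_of_nonneg_left (exp_le_exp.2 (by nlinarith [norm_nonneg v]))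
    (by have := pi_pos; positivity)

lemma one_add_norm_rpow_mul_maxw_le {p : ℝ} (hp : 0 ≤ p) (v : Rd d) :
    (1 + ‖v‖) ^ p * Maxw d v ≤ (2 * π) ^ (-(d : ℝ) / 2) * exp (p ^ 2) * exp (-(1 / 4) * ‖v‖ ^ 2) :=
  calc (1 + ‖v‖) ^ p * Maxw d v
      ≤ exp (p ^ 2 + ‖v‖ ^ 2 / 4) * Maxw d v :=
        mul_le_mul_of_nonneg_right (one_add_rpow_le_exp hp (norm_nonneg v)) (maxw_pos v).le
    _ = (2 * π) ^ (-(d : ℝ) / 2) * exp (p ^ 2) * exp (-(1 / 4) * ‖v‖ ^ 2) := by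
        unfold Maxw
        rw [mul_left_comm, ← exp_add, mul_assoc, ← exp_add]
        ring_nf

end Maxwellian

section CollisionFrequency

variable {d : ℕ} {γ : ℝ}

lemma integrable_rpow_norm_sub_mul_maxw (hγ : γ ≤ 0) (hγd : -(d : ℝ) < γ) (v : Rd d) :
    Integrable (fun vs : Rd d => ‖v - vs‖ ^ γ * Maxw d vs) :=
  integrable_rpow_norm_sub_mul hγ (by rwa [finrank_euclideanSpace_fin]) integrable_maxw
    (fun vs => (maxw_pos vs).le) maxw_le v

lemma exists_mul_le_collFreq (hγ : γ ≤ 0) (hγd : -(d : ℝ) < γ) :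
    ∃ C > 0, ∀ v : Rd d, C * (1 + ‖v‖) ^ γ ≤ collFreq d γ v := by
  set c := (2 * π) ^ (-(d : ℝ) / 2) * exp (-1 / 2)
  have hc0 : 0 < c := by have := pi_pos; positivity
  have hball : 0 < volume.real (ball (0 : Rd d) 1) :=
    ENNReal.toReal_pos (measure_ball_pos volume 0 one_pos).ne' measure_ball_lt_top.ne
  -- makes `volume` atomless, so that `v` itself can be ignored below
  have : Nontrivial (Rd d) := Module.nontrivial_of_finrank_pos (R := ℝ) <| by
    rw [finrank_euclideanSpace_fin]; exact_mod_cast (show (0 : ℝ) < d by linarith)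
  refine ⟨c * volume.real (ball (0 : Rd d) 1), mul_pos hc0 hball, fun v => ?_⟩
  have hint := integrable_rpow_norm_sub_mul_maxw hγ hγd v
  calc c * volume.real (ball (0 : Rd d) 1) * (1 + ‖v‖) ^ γ
      = ∫ _ in ball (0 : Rd d) 1, (1 + ‖v‖) ^ γ * c := by
        rw [setIntegral_const, smul_eq_mul]; ring
    _ ≤ ∫ vs in ball (0 : Rd d) 1, ‖v - vs‖ ^ γ * Maxw d vs := by
        refine integral_mono_ae (integrableOn_const measure_ball_lt_top.ne) hint.integrableOn ?_
        filter_upwards [ae_restrict_mem measurableSet_ball,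
          ae_restrict_of_ae ((countable_singleton v).ae_notMem volume)] with vs hvs hne
        have hpos : 0 < ‖v - vs‖ := norm_pos_iff.2 (sub_ne_zero.2 (Ne.symm hne))
        have hvs1 : ‖vs‖ ≤ 1 := (mem_ball_zero_iff.1 hvs).le
        exact mul_le_mul
          (Real.rpow_le_rpow_of_nonpos hpos (by linarith [norm_sub_le v vs]) hγ)
          (maxw_ge_of_norm_le_one hvs1) hc0.le (Real.rpow_nonneg hpos.le _)
    _ ≤ collFreq d γ v :=
        setIntegral_le_integral hint (ae_of_all _ fun vs =>
          mul_nonneg (Real.rpow_nonneg (norm_nonneg _) _) (maxw_pos vs).le)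

lemma norm_sub_rpow_mul_maxw_le (hγ : γ ≤ 0) (v w : Rd d) :
    ‖v - w‖ ^ γ * Maxw d w ≤ 2 ^ (-γ) * (1 + ‖v‖) ^ γ *
      ((1 + ‖v - w‖ ^ γ) * ((2 * π) ^ (-(d : ℝ) / 2) * exp ((-γ) ^ 2) *
        exp (-(1 / 4) * ‖w‖ ^ 2))) :=
  calc ‖v - w‖ ^ γ * Maxw d w
      ≤ 2 ^ (-γ) * (1 + ‖v‖) ^ γ * ((1 + ‖w‖) ^ (-γ) * (1 + ‖v - w‖ ^ γ)) * Maxw d w :=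
        mul_le_mul_of_nonneg_right (norm_sub_rpow_le hγ v w) (maxw_pos w).le
    _ = 2 ^ (-γ) * (1 + ‖v‖) ^ γ * ((1 + ‖v - w‖ ^ γ) * ((1 + ‖w‖) ^ (-γ) * Maxw d w)) := by
        ring
    _ ≤ _ :=
        mul_le_mul_of_nonneg_left (mul_le_mul_of_nonneg_left
          (one_add_norm_rpow_mul_maxw_le (neg_nonneg.2 hγ) w) (by positivity)) (by positivity)

lemma exists_collFreq_le_mul (hγ : γ ≤ 0) (hγd : -(d : ℝ) < γ) :
    ∃ C, ∀ v : Rd d, collFreq d γ v ≤ C * (1 + ‖v‖) ^ γ := by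
  set B := (2 * π) ^ (-(d : ℝ) / 2) * exp ((-γ) ^ 2)
  have hB0 : 0 < B := by have := pi_pos; positivity
  set g : Rd d → ℝ := fun w => B * exp (-(1 / 4) * ‖w‖ ^ 2)
  have hg : Integrable g := (integrable_exp_neg_mul_sq_norm (by norm_num)).const_mul B
  have hg0 (w : Rd d) : 0 ≤ g w := by positivity
  have hgB (w : Rd d) : g w ≤ B :=
    mul_le_of_le_one_right hB0.le (exp_le_one_iff.2 (by nlinarith [sq_nonneg ‖w‖]))
  have hγd' : -(Module.finrank ℝ (Rd d) : ℝ) < γ := by rwa [finrank_euclideanSpace_fin]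
  set G := ∫ w, g w
  set I := ∫ x in ball (0 : Rd d) 1, ‖x‖ ^ γ
  refine ⟨2 ^ (-γ) * (G + (B * I + G)), fun v => ?_⟩
  have hint := integrable_rpow_norm_sub_mul hγ hγd' hg hg0 hgB v
  calc collFreq d γ v
      ≤ ∫ w, 2 ^ (-γ) * (1 + ‖v‖) ^ γ * (g w + ‖v - w‖ ^ γ * g w) :=
        integral_mono_of_nonneg (ae_of_all _ fun w =>
            mul_nonneg (Real.rpow_nonneg (norm_nonneg _) _) (maxw_pos w).le)
          ((hg.add hint).const_mul _)
          (ae_of_all _ fun w => (norm_sub_rpow_mul_maxw_le hγ v w).trans_eq (by ring))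
    _ = 2 ^ (-γ) * (1 + ‖v‖) ^ γ * (G + ∫ w, ‖v - w‖ ^ γ * g w) := by
        rw [integral_const_mul, integral_add hg hint]
    _ ≤ 2 ^ (-γ) * (1 + ‖v‖) ^ γ * (G + (B * I + G)) := by
        gcongr
        exact integral_rpow_norm_sub_mul_le hγ hγd' hg hg0 hgB v
    _ = _ := by ring

end CollisionFrequency

theorem collision_frequency_bounds_general (d : ℕ) (γ : ℝ)
    (hγl : -(d : ℝ) < γ) (hγu : γ < 0) :
    ∃ C₁ C₂ : ℝ, 0 < C₁ ∧ 0 < C₂ ∧ ∀ v : Rd d,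
      C₁ * (1 + ‖v‖) ^ γ ≤ collFreq d γ v ∧ collFreq d γ v ≤ C₂ * (1 + ‖v‖) ^ γ := by
  obtain ⟨C₁, hC₁, hlower⟩ := exists_mul_le_collFreq hγu.le hγl
  obtain ⟨C₂, hupper⟩ := exists_collFreq_le_mul hγu.le hγl
  have hC₂ : 0 < C₂ := by
    have h0 := (hlower 0).trans (hupper 0)
    simp only [norm_zero, add_zero, Real.one_rpow, mul_one] at h0
    exact hC₁.trans_le h0
  exact ⟨C₁, C₂, hC₁, hC₂, fun v => ⟨hlower v, hupper v⟩⟩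

/-- two-sided bounds for the collision frequency `Σ_γ`. -/
theorem collision_frequency_bounds (d : ℕ) (hd : 1 ≤ d) (γ : ℝ)
    (hγl : -(d : ℝ) < γ) (hγu : γ < 0) :
    ∃ C₁ C₂ : ℝ, 0 < C₁ ∧ 0 < C₂ ∧ ∀ v : Rd d,
      C₁ * (1 + ‖v‖) ^ γ ≤ collFreq d γ v ∧ collFreq d γ v ≤ C₂ * (1 + ‖v‖) ^ γ :=
  collision_frequency_bounds_general d γ hγl hγu
end
end

section
/- Fix an integer d ≥ 1 and let f ∈ L¹(ℝ^d) be nonnegative with unit mass such that ∫_{ℝ^d} f(v) |log(f(v)/M(v))| dv < ∞. For 0 < δ < 1 set f_δ = (1-δ) f + δ M. Then H(f|M) ≤ H(f_δ|M)/(1-δ) + (δ/(1-δ)) · ( log(1/δ) − ((1-δ)/δ) log(1-δ) ). -/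
open MeasureTheory Real
open scoped ENNReal RealInnerProductSpace

noncomputable section

/-! Since `log` is increasing, `x ↦ x log (x / M)` is superadditive on `[0, ∞)`; splitting
`f_δ = (1 - δ) f + δ M` gives pointwise
`f_δ log (f_δ / M) ≥ (1 - δ) f log (f / M) + (1 - δ) log (1 - δ) f + δ log δ M`,
and integrating against the unit masses of `f` and `M` gives the claim. Convexity of `x log x`
bounds the left side above by `(1 - δ) f log (f / M)`, which makes it integrable. -/

theorem Maxw_pos (d : ℕ) (v : Rd d) : 0 < Maxw d v := by
  unfold Maxw
  positivity

theorem integral_Maxw (d : ℕ) : ∫ v : Rd d, Maxw d v = 1 := by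
  have hgauss := GaussianFourier.integral_rexp_neg_mul_sq_norm (V := Rd d) (b := 2⁻¹) (by norm_num)
  have hpi : π / 2⁻¹ = 2 * π := by ring
  simp only [finrank_euclideanSpace_fin, hpi, neg_mul, ← neg_div, inv_mul_eq_div] at hgauss
  simp only [Maxw]
  rw [integral_const_mul, hgauss, ← Real.rpow_add (by positivity), neg_div,
    neg_add_cancel, Real.rpow_zero]

theorem integrable_Maxw (d : ℕ) : Integrable (Maxw d) :=
  .of_integral_ne_zero (by rw [integral_Maxw]; exact one_ne_zero)

theorem mul_log_div_add_mul_log_div_le {a b m : ℝ} (ha : 0 ≤ a) (hb : 0 ≤ b) (hm : 0 < m) :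
    a * log (a / m) + b * log (b / m) ≤ (a + b) * log ((a + b) / m) := by
  rcases ha.eq_or_lt with rfl | ha
  · simp
  rcases hb.eq_or_lt with rfl | hb
  · simp
  have hlog {x : ℝ} (hx : 0 < x) (hxab : x ≤ a + b) : log (x / m) ≤ log ((a + b) / m) :=
    log_le_log (by positivity) (by gcongr)
  nlinarith [hlog ha (by linarith), hlog hb (by linarith)]

theorem mul_mul_log_mul_div (c a : ℝ) {m : ℝ} (hm : m ≠ 0) :
    c * a * log (c * a / m) = c * (a * log (a / m)) + c * log c * a := by
  rcases eq_or_ne c 0 with rfl | hc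
  · simp
  rcases eq_or_ne a 0 with rfl | ha
  · simp
  rw [mul_div_assoc, log_mul hc (div_ne_zero ha hm)]
  ring

theorem lineMap_mul_log_div_le {a m t : ℝ} (ha : 0 ≤ a) (hm : 0 < m) (ht0 : 0 ≤ t) (ht1 : t ≤ 1) :
    ((1 - t) * a + t * m) * log (((1 - t) * a + t * m) / m) ≤ (1 - t) * (a * log (a / m)) := by
  have hconv := convexOn_mul_log.2 (Set.mem_Ici.2 (div_nonneg ha hm.le))
    (Set.mem_Ici.2 zero_le_one) (sub_nonneg.2 ht1) ht0 (sub_add_cancel 1 t)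
  have hmix : ((1 - t) * a + t * m) / m = (1 - t) * (a / m) + t := by field_simp
  simp only [smul_eq_mul, mul_one, log_one, mul_zero, add_zero] at hconv
  calc ((1 - t) * a + t * m) * log (((1 - t) * a + t * m) / m)
      = m * (((1 - t) * (a / m) + t) * log ((1 - t) * (a / m) + t)) := by
        rw [← hmix]; field_simp
    _ ≤ m * ((1 - t) * (a / m * log (a / m))) := by gcongr
    _ = (1 - t) * (a * log (a / m)) := by field_simp

theorem le_lineMap_mul_log_div {a m t : ℝ} (ha : 0 ≤ a) (hm : 0 < m) (ht0 : 0 ≤ t) (ht1 : t ≤ 1) :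
    (1 - t) * (a * log (a / m)) + (1 - t) * log (1 - t) * a + t * log t * m ≤
      ((1 - t) * a + t * m) * log (((1 - t) * a + t * m) / m) := by
  have hsuper := mul_log_div_add_mul_log_div_le (mul_nonneg (sub_nonneg.2 ht1) ha)
    (mul_nonneg ht0 hm.le) hm
  rwa [mul_mul_log_mul_div _ _ hm.ne', mul_mul_log_mul_div _ _ hm.ne', div_self hm.ne', log_one,
    mul_zero, mul_zero, zero_add] at hsuper

section Mixture

variable {α : Type*} [MeasurableSpace α] {μ : Measure α} {f m : α → ℝ} {t : ℝ}

theorem integrable_lineMap_mul_log_div (hf : Integrable f μ) (hm : Integrable m μ)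
    (hf0 : ∀ x, 0 ≤ f x) (hm0 : ∀ x, 0 < m x)
    (hent : Integrable (fun x => f x * log (f x / m x)) μ) (ht0 : 0 ≤ t) (ht1 : t ≤ 1) :
    Integrable (fun x => ((1 - t) * f x + t * m x) * log (((1 - t) * f x + t * m x) / m x)) μ := by
  have hfm := hf.aemeasurable
  have hmm := hm.aemeasurable
  refine integrable_of_le_of_le (by fun_prop) ?_ ?_
    (((hent.const_mul (1 - t)).fun_add (hf.const_mul ((1 - t) * log (1 - t)))).fun_add
      (hm.const_mul (t * log t))) (hent.const_mul (1 - t))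
  · exact .of_forall fun x => le_lineMap_mul_log_div (hf0 x) (hm0 x) ht0 ht1
  · exact .of_forall fun x => lineMap_mul_log_div_le (hf0 x) (hm0 x) ht0 ht1

theorem le_integral_lineMap_mul_log_div (hf : Integrable f μ) (hm : Integrable m μ)
    (hf0 : ∀ x, 0 ≤ f x) (hm0 : ∀ x, 0 < m x)
    (hent : Integrable (fun x => f x * log (f x / m x)) μ) (ht0 : 0 ≤ t) (ht1 : t ≤ 1) :
    (1 - t) * ∫ x, f x * log (f x / m x) ∂μ + (1 - t) * log (1 - t) * ∫ x, f x ∂μ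
        + t * log t * ∫ x, m x ∂μ ≤
      ∫ x, ((1 - t) * f x + t * m x) * log (((1 - t) * f x + t * m x) / m x) ∂μ := by
  have hent' := hent.const_mul (1 - t)
  have hf' := hf.const_mul ((1 - t) * log (1 - t))
  have hm' := hm.const_mul (t * log t)
  have hlow := integral_mono ((hent'.fun_add hf').fun_add hm')
    (integrable_lineMap_mul_log_div hf hm hf0 hm0 hent ht0 ht1)
    fun x => le_lineMap_mul_log_div (hf0 x) (hm0 x) ht0 ht1
  rwa [integral_add (hent'.fun_add hf') hm', integral_add hent' hf', integral_const_mul,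
    integral_const_mul, integral_const_mul] at hlow

end Mixture

theorem relative_entropy_modification_general (d : ℕ)
    (f : Rd d → ℝ) (hfint : Integrable f) (hfnn : ∀ v, 0 ≤ f v)
    (hmass : (∫ v : Rd d, f v) = 1)
    (hent : Integrable (fun v : Rd d => f v * Real.log (f v / Maxw d v)))
    (δ : ℝ) (hδ0 : 0 < δ) (hδ1 : δ < 1) :
    relEnt d f ≤ relEnt d (fun v => (1 - δ) * f v + δ * Maxw d v) / (1 - δ)
      + δ / (1 - δ) * (Real.log (1 / δ) - (1 - δ) / δ * Real.log (1 - δ)) := by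
  have hmix := le_integral_lineMap_mul_log_div hfint (integrable_Maxw d) hfnn (Maxw_pos d) hent
    hδ0.le hδ1.le
  rw [hmass, integral_Maxw] at hmix
  change (1 - δ) * relEnt d f + _ + _ ≤ relEnt d _ at hmix
  have h1δ : 0 < 1 - δ := sub_pos.2 hδ1
  have hconst : δ / (1 - δ) * (log (1 / δ) - (1 - δ) / δ * log (1 - δ)) =
      -(δ * log δ + (1 - δ) * log (1 - δ)) / (1 - δ) := by
    rw [one_div, log_inv]
    field_simp
    ring
  rw [hconst, ← add_div, le_div_iff₀ h1δ]
  linarith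

/-- comparison of the relative entropies of `f` and of `f_δ = (1-δ)f + δM`. -/
theorem relative_entropy_modification (d : ℕ) (hd : 1 ≤ d)
    (f : Rd d → ℝ) (hfint : Integrable f) (hfnn : ∀ v, 0 ≤ f v)
    (hmass : (∫ v : Rd d, f v) = 1)
    (hent : Integrable (fun v : Rd d => f v * Real.log (f v / Maxw d v)))
    (δ : ℝ) (hδ0 : 0 < δ) (hδ1 : δ < 1) :
    relEnt d f ≤ relEnt d (fun v => (1 - δ) * f v + δ * Maxw d v) / (1 - δ)
      + δ / (1 - δ) * (Real.log (1 / δ) - (1 - δ) / δ * Real.log (1 - δ)) :=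
  relative_entropy_modification_general d f hfint hfnn hmass hent δ hδ0 hδ1
end
end

section
/- Let α, β, C > 0 with α < 1, let u : [0,∞) → [0,∞) be absolutely continuous and let ξ : [0,∞) → [0,∞) be measurable with u'(t) ≤ −C (1+t)^{-α} u(t)^{1+β} + ξ(t) for almost every t ≥ 0. Suppose C_ξ := sup_{t ≥ 0} (1+t)^{(β+1-α)/β} ξ(t) < ∞. Then for all t ≥ 0: u(t) ≤ max( 1, u(0), ((1-α+β C_ξ)/(β C))^{1/β} ) · (1+t)^{-(1-α)/β}. -/
/-!
The barrier `φ(t) = K (1 + t)^(-(1-α)/β)` is a supersolution of the differential inequality: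
every term of `φ' + C (1+t)^(-α) φ^(1+β) - ξ` scales like `(1 + t)^(-(1-α)/β - 1)`, and the
choice of `K` makes `C K^(1+β) ≥ K (1-α)/β + C_ξ`. Since the right-hand side is decreasing in
`u`, we get `u' ≤ φ'` a.e. wherever `u > φ`, and as `u(0) ≤ φ(0)` a comparison argument for
absolutely continuous functions gives `u ≤ φ`.
-/

open MeasureTheory Real
open scoped ENNReal RealInnerProductSpace

noncomputable section

open Set

theorem nonpos_of_ae_deriv_nonpos_where_pos {w w' : ℝ → ℝ} {a b : ℝ} (hab : a ≤ b)
    (hw'int : IntegrableOn w' (Icc a b))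
    (hw : ∀ t ∈ Icc a b, w t = w a + ∫ s in a..t, w' s)
    (ha : w a ≤ 0) (hderiv : ∀ᵐ t, t ∈ Icc a b → 0 < w t → w' t ≤ 0) :
    w b ≤ 0 := by
  have hcont : ContinuousOn w (Icc a b) := by
    have := intervalIntegral.continuousOn_primitive_interval (μ := volume) (a := a) (b := b)
      (f := w') (by rwa [uIcc_of_le hab])
    rw [uIcc_of_le hab] at this
    exact (continuousOn_const.add this).congr hw
  -- `T` is the last time in `[a, b]` at which `w ≤ 0`; after it `w > 0`, so `w` cannot grow.
  set S := Icc a b ∩ w ⁻¹' Iic 0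
  have hS_bdd : BddAbove S := bddAbove_Icc.mono inter_subset_left
  obtain ⟨⟨haT, hTb⟩, hwT⟩ : sSup S ∈ S :=
    (hcont.preimage_isClosed_of_isClosed isClosed_Icc isClosed_Iic).csSup_mem
      ⟨a, ⟨le_rfl, hab⟩, ha⟩ hS_bdd
  set T := sSup S
  have hpos : ∀ t ∈ Ioc T b, 0 < w t := fun t ht ↦ by
    by_contra! h
    exact (le_csSup hS_bdd ⟨⟨haT.trans ht.1.le, ht.2⟩, h⟩).not_gt ht.1
  have hincr : w b - w T = ∫ s in T..b, w' s := by
    rw [hw b ⟨hab, le_rfl⟩, hw T ⟨haT, hTb⟩, ← intervalIntegral.integral_interval_sub_left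
      (hw'int.mono_set (uIcc_of_le hab).subset).intervalIntegrable
      (hw'int.mono_set ((uIcc_of_le haT).trans_subset
        (Icc_subset_Icc_right hTb))).intervalIntegrable]
    ring
  have hincr_nonpos : ∫ s in T..b, w' s ≤ 0 := by
    rw [intervalIntegral.integral_of_le hTb]
    refine setIntegral_nonpos_ae measurableSet_Ioc (hderiv.mono fun t ht hmem ↦ ?_)
    exact ht ⟨haT.trans hmem.1.le, hmem.2⟩ (hpos t hmem)
  linarith [show w T ≤ 0 from hwT]

theorem le_of_ae_deriv_le_where_gt {u u' φ φ' : ℝ → ℝ} {a b : ℝ} (hab : a ≤ b)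
    (hu'int : IntegrableOn u' (Icc a b))
    (hu : ∀ t ∈ Icc a b, u t = u a + ∫ s in a..t, u' s)
    (hφ : ∀ t ∈ Icc a b, HasDerivAt φ (φ' t) t) (hφ' : ContinuousOn φ' (Icc a b))
    (ha : u a ≤ φ a) (hderiv : ∀ᵐ t, t ∈ Icc a b → φ t < u t → u' t ≤ φ' t) :
    u b ≤ φ b := by
  have hw : ∀ t ∈ Icc a b, u t - φ t = u a - φ a + ∫ s in a..t, (u' s - φ' s) := by
    intro t ht
    have hsub : uIcc a t ⊆ Icc a b := (uIcc_of_le ht.1).trans_subset (Icc_subset_Icc_right ht.2)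
    have hφ'int : IntervalIntegrable φ' volume a t := (hφ'.mono hsub).intervalIntegrable
    rw [intervalIntegral.integral_sub ((hu'int.mono_set hsub).intervalIntegrable) hφ'int,
      intervalIntegral.integral_eq_sub_of_hasDerivAt (fun s hs ↦ hφ s (hsub hs)) hφ'int, hu t ht]
    ring
  have := nonpos_of_ae_deriv_nonpos_where_pos hab (hu'int.sub (hφ'.integrableOn_Icc)) hw
    (sub_nonpos.2 ha) (hderiv.mono fun t ht hmem hpos ↦ sub_nonpos.2 (ht hmem (sub_pos.1 hpos)))
  linarith

def decayBarrier (K p t : ℝ) : ℝ := K * (1 + t) ^ (-p)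

theorem hasDerivAt_decayBarrier (K p : ℝ) {t : ℝ} (ht : 0 < 1 + t) :
    HasDerivAt (decayBarrier K p) (-(K * p) * (1 + t) ^ (-p - 1)) t := by
  have := (((hasDerivAt_id t).const_add 1).rpow_const (p := -p) (Or.inl ht.ne')).const_mul K
  exact this.congr_deriv (by simp only [id]; ring)

theorem continuousOn_deriv_decayBarrier (K p : ℝ) :
    ContinuousOn (fun t ↦ -(K * p) * (1 + t) ^ (-p - 1)) (Ici 0) :=
  continuousOn_const.mul <| (continuousOn_const.add continuousOn_id).rpow_const
    fun _ ht ↦ Or.inl (add_pos_of_pos_of_nonneg one_pos ht).ne'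

theorem decayBarrier_supersolution {α β p C K Cξ t y ξt : ℝ} (hβ : 0 ≤ 1 + β) (hpβ : p * β = 1 - α)
    (hC : 0 ≤ C) (hK : 0 ≤ K) (ht : 0 < 1 + t) (hy : decayBarrier K p t ≤ y)
    (hkey : K * p + Cξ ≤ C * K ^ (1 + β)) (hξ : (1 + t) ^ (p + 1) * ξt ≤ Cξ) :
    -C * (1 + t) ^ (-α) * y ^ (1 + β) + ξt ≤ -(K * p) * (1 + t) ^ (-p - 1) := by
  have hξ_le : ξt ≤ Cξ * (1 + t) ^ (-p - 1) := by
    rwa [show -p - 1 = -(p + 1) by ring, rpow_neg ht.le, ← div_eq_mul_inv,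
      le_div_iff₀ (rpow_pos_of_pos ht _), mul_comm]
  set r := (1 + t) ^ (-p - 1)
  have hr : 0 < r := rpow_pos_of_pos ht _
  have hbarrier : (1 + t) ^ (-α) * decayBarrier K p t ^ (1 + β) = K ^ (1 + β) * r := by
    rw [decayBarrier, mul_rpow hK (rpow_nonneg ht.le _), ← rpow_mul ht.le, mul_left_comm,
      ← rpow_add ht]
    congr 2
    linear_combination -hpβ
  have hy_pow : decayBarrier K p t ^ (1 + β) ≤ y ^ (1 + β) :=
    rpow_le_rpow (mul_nonneg hK (rpow_nonneg ht.le _)) hy hβ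
  calc -C * (1 + t) ^ (-α) * y ^ (1 + β) + ξt
      ≤ -C * ((1 + t) ^ (-α) * decayBarrier K p t ^ (1 + β)) + Cξ * r := by
        have := mul_le_mul_of_nonneg_left hy_pow (mul_nonneg hC (rpow_nonneg ht.le (-α)))
        nlinarith
    _ = (Cξ - C * K ^ (1 + β)) * r := by rw [hbarrier]; ring
    _ ≤ -(K * p) * r := mul_le_mul_of_nonneg_right (by linarith) hr.le

theorem decayBarrier_height_condition {α β C Cξ K : ℝ} (hα : α < 1) (hβ : 0 < β) (hC : 0 < C)
    (hCξ : 0 ≤ Cξ) (hK1 : 1 ≤ K) (hK : ((1 - α + β * Cξ) / (β * C)) ^ (1 / β) ≤ K) :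
    K * ((1 - α) / β) + Cξ ≤ C * K ^ (1 + β) := by
  have hK0 : 0 ≤ K := zero_le_one.trans hK1
  have hKβ : 1 - α + β * Cξ ≤ β * C * K ^ β := by
    rw [one_div, rpow_inv_le_iff_of_pos (by positivity) hK0 hβ, div_le_iff₀ (by positivity)] at hK
    linarith
  have hCξ_le : Cξ ≤ K * Cξ := le_mul_of_one_le_left hCξ hK1
  rw [rpow_add' hK0 (by linarith), rpow_one, mul_div_assoc', div_add' _ _ _ hβ.ne', div_le_iff₀ hβ]
  nlinarith [mul_le_mul_of_nonneg_left hKβ hK0]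

theorem differential_inequality_decay_general (α β C : ℝ)
    (hα1 : α < 1) (hβ : 0 < β) (hC : 0 < C)
    (u u' ξ : ℝ → ℝ)
    (hξnn : ∀ t : ℝ, 0 ≤ t → 0 ≤ ξ t)
    (hu'int : ∀ t : ℝ, 0 ≤ t → IntegrableOn u' (Set.Icc 0 t))
    (huAC : ∀ t : ℝ, 0 ≤ t → u t = u 0 + ∫ s in (0 : ℝ)..t, u' s)
    (hode : ∀ᵐ t : ℝ, 0 ≤ t → u' t ≤ -C * (1 + t) ^ (-α) * u t ^ (1 + β) + ξ t)
    (Cξ : ℝ) (hCξ : ∀ t : ℝ, 0 ≤ t → (1 + t) ^ ((β + 1 - α) / β) * ξ t ≤ Cξ) :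
    ∀ t : ℝ, 0 ≤ t →
      u t ≤ max 1 (max (u 0) (((1 - α + β * Cξ) / (β * C)) ^ (1 / β)))
        * (1 + t) ^ (-(1 - α) / β) := by
  intro t ht
  set K := max 1 (max (u 0) (((1 - α + β * Cξ) / (β * C)) ^ (1 / β)))
  set p := (1 - α) / β
  have hK1 : 1 ≤ K := le_max_left _ _
  have hCξ0 : 0 ≤ Cξ := (hξnn 0 le_rfl).trans (by simpa using hCξ 0 le_rfl)
  have hkey : K * p + Cξ ≤ C * K ^ (1 + β) :=
    decayBarrier_height_condition hα1 hβ hC hCξ0 hK1 (le_max_of_le_right (le_max_right _ _))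
  have hpβ : p * β = 1 - α := div_mul_cancel₀ _ hβ.ne'
  have hexp : (β + 1 - α) / β = p + 1 := by
    rw [div_eq_iff hβ.ne']; linear_combination -hpβ
  rw [show -(1 - α) / β = -p by ring]
  refine le_of_ae_deriv_le_where_gt ht (hu'int t ht) (fun s hs ↦ huAC s hs.1)
    (fun s hs ↦ hasDerivAt_decayBarrier K p (by linarith [hs.1]))
    ((continuousOn_deriv_decayBarrier K p).mono Icc_subset_Ici_self) ?_ ?_
  · rw [decayBarrier, add_zero, one_rpow, mul_one]
    exact le_max_of_le_right (le_max_left _ _)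
  · filter_upwards [hode] with s hs hmem hlt
    exact (hs hmem.1).trans (decayBarrier_supersolution (by linarith) hpβ hC.le (by linarith)
      (by linarith [hmem.1]) hlt.le hkey (hexp ▸ hCξ s hmem.1))

/-- algebraic decay for solutions of a differential inequality. -/
theorem differential_inequality_decay (α β C : ℝ)
    (hα0 : 0 < α) (hα1 : α < 1) (hβ : 0 < β) (hC : 0 < C)
    (u u' ξ : ℝ → ℝ)
    (hunn : ∀ t : ℝ, 0 ≤ t → 0 ≤ u t) (hξnn : ∀ t : ℝ, 0 ≤ t → 0 ≤ ξ t)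
    (hξm : Measurable ξ)
    (hu'int : ∀ t : ℝ, 0 ≤ t → IntegrableOn u' (Set.Icc 0 t))
    (huAC : ∀ t : ℝ, 0 ≤ t → u t = u 0 + ∫ s in (0 : ℝ)..t, u' s)
    (hode : ∀ᵐ t : ℝ, 0 ≤ t → u' t ≤ -C * (1 + t) ^ (-α) * u t ^ (1 + β) + ξ t)
    (Cξ : ℝ) (hCξ : ∀ t : ℝ, 0 ≤ t → (1 + t) ^ ((β + 1 - α) / β) * ξ t ≤ Cξ) :
    ∀ t : ℝ, 0 ≤ t →
      u t ≤ max 1 (max (u 0) (((1 - α + β * Cξ) / (β * C)) ^ (1 / β)))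
        * (1 + t) ^ (-(1 - α) / β) :=
  differential_inequality_decay_general α β C hα1 hβ hC u u' ξ hξnn hu'int huAC hode Cξ hCξ
end
end

section
/- Fix an integer d ≥ 2, γ ∈ (-d, 0] and β ≤ 0. There exists a constant C > 0, depending only on d, γ and β, such that for all v, w ∈ ℝ^d with v ≠ w: |v-w|^β ∫_{(v-w)^⊥} exp(-|V_⊥ + z|²/2) (|z|² + |v-w|²)^{(γ-d+2)/2} dz ≥ C exp(-(|v|² + |w|²)). -/
open MeasureTheory Real
open scoped ENNReal RealInnerProductSpace

noncomputable section

/-! Restrict the integral to the unit ball of the hyperplane. There `|V_⊥ + z|² ≤ |v|² + |w|² + 2`,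
since the projection is a contraction and `|v + w|² ≤ 2(|v|² + |w|²)` by the parallelogram law,
and `|z|² + |v - w|² ≤ 1 + 2(|v|² + |w|²)`. As the exponents `β/2` and `(γ - d + 2)/2` are
nonpositive, this bounds the left side below by `t ^ (β/2 + (γ - d + 2)/2) · exp(-(|v|² + |w|²)/2)`
with `t = 1 + 2(|v|² + |w|²)`, and a nonpositive power of `t` dominates `exp(-t/4)`. The unit ball
of the hyperplane has the volume of the unit ball of `ℝ^(d-1)`, whatever `v` and `w` are. -/

namespace Real

theorem rpow_le_exp_mul_log_sub_add {a x : ℝ} (ha : 0 ≤ a) (hx : 0 < x) :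
    x ^ a ≤ exp (a * log a - a + x) := by
  rw [rpow_def_of_pos hx, exp_le_exp]
  rcases ha.eq_or_lt with rfl | ha
  · simpa using hx.le
  · have h := log_le_sub_one_of_pos (div_pos hx ha)
    rw [log_div hx.ne' ha.ne', le_sub_iff_add_le, le_div_iff₀ ha] at h
    linarith

theorem exists_mul_exp_neg_mul_le_rpow {q c : ℝ} (hq : q ≤ 0) (hc : 0 < c) :
    ∃ C : ℝ, 0 < C ∧ ∀ x : ℝ, 0 < x → C * exp (-(c * x)) ≤ x ^ q := by
  obtain ⟨a, rfl⟩ : ∃ a, q = -a := ⟨-q, by ring⟩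
  have ha : 0 ≤ a := by linarith
  refine ⟨c ^ a * exp (-(a * log a - a)), by positivity, fun x hx => ?_⟩
  have h := rpow_le_exp_mul_log_sub_add ha (mul_pos hc hx)
  rw [mul_rpow hc.le hx.le, exp_add] at h
  rw [rpow_neg hx.le, le_inv_comm₀ (by positivity) (by positivity), exp_neg, exp_neg]
  calc x ^ a = (c ^ a)⁻¹ * (c ^ a * x ^ a) := by field_simp
    _ ≤ (c ^ a)⁻¹ * (exp (a * log a - a) * exp (c * x)) := by gcongr
    _ = _ := by field_simp

end Real

section InnerProductSpace

open Metric

variable {E : Type*} [NormedAddCommGroup E] [InnerProductSpace ℝ E] [FiniteDimensional ℝ E]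
  [MeasurableSpace E] [BorelSpace E]

theorem integrable_exp_neg_norm_sq_div_two : Integrable fun z : E => exp (-‖z‖ ^ 2 / 2) := by
  have h := (GaussianFourier.integrable_cexp_neg_mul_sq_norm_add (V := E) (b := 2⁻¹)
    (by norm_num) 0 0).norm
  convert h using 2 with z
  rw [Complex.norm_exp]
  simp [div_eq_inv_mul, ← Complex.ofReal_pow]

theorem integrable_exp_neg_norm_add_sq_mul_rpow (c : E) {r p : ℝ} (hr : r ≠ 0) (hp : p ≤ 0) :
    Integrable fun z : E => exp (-‖c + z‖ ^ 2 / 2) * (‖z‖ ^ 2 + r ^ 2) ^ p := by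
  refine ((integrable_exp_neg_norm_sq_div_two.comp_add_left c).mul_const ((r ^ 2) ^ p)).mono'
    (by fun_prop (disch := intro; positivity)) (ae_of_all _ fun z => ?_)
  rw [norm_of_nonneg (by positivity)]
  exact mul_le_mul_of_nonneg_left (rpow_le_rpow_of_nonpos (by positivity)
    (le_add_of_nonneg_left (by positivity)) hp) (exp_pos _).le

theorem volume_ball_mul_le_integral_exp_neg_norm_add_sq_mul_rpow (c : E) {r p : ℝ} (hr : r ≠ 0)
    (hp : p ≤ 0) :
    (volume (ball (0 : E) 1)).toReal * (exp (-(‖c‖ + 1) ^ 2 / 2) * (1 + r ^ 2) ^ p) ≤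
      ∫ z, exp (-‖c + z‖ ^ 2 / 2) * (‖z‖ ^ 2 + r ^ 2) ^ p := by
  have hint := integrable_exp_neg_norm_add_sq_mul_rpow c hr hp
  have hball : ∀ z ∈ ball (0 : E) 1, exp (-(‖c‖ + 1) ^ 2 / 2) * (1 + r ^ 2) ^ p ≤
      exp (-‖c + z‖ ^ 2 / 2) * (‖z‖ ^ 2 + r ^ 2) ^ p := by
    intro z hz
    rw [mem_ball_zero_iff] at hz
    have hcz : ‖c + z‖ ≤ ‖c‖ + 1 := (norm_add_le c z).trans (by linarith)
    have hz2 : ‖z‖ ^ 2 ≤ 1 := by nlinarith [norm_nonneg z]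
    apply mul_le_mul _ (rpow_le_rpow_of_nonpos (by positivity) (by linarith) hp) (by positivity)
      (exp_pos _).le
    gcongr
  calc (volume (ball (0 : E) 1)).toReal * (exp (-(‖c‖ + 1) ^ 2 / 2) * (1 + r ^ 2) ^ p)
      ≤ ∫ z in ball (0 : E) 1, exp (-‖c + z‖ ^ 2 / 2) * (‖z‖ ^ 2 + r ^ 2) ^ p := by
        rw [mul_comm]
        exact setIntegral_ge_of_const_le_real measurableSet_ball measure_ball_lt_top.ne hball
          hint.integrableOn
    _ ≤ ∫ z, exp (-‖c + z‖ ^ 2 / 2) * (‖z‖ ^ 2 + r ^ 2) ^ p :=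
        setIntegral_le_integral hint (ae_of_all _ fun z => by positivity)

theorem volume_ball_of_finrank_eq {n : ℕ} (h : Module.finrank ℝ E = n) (r : ℝ) :
    volume (ball (0 : E) r) = volume (ball (0 : EuclideanSpace ℝ (Fin n)) r) := by
  subst h
  rw [← (stdOrthonormalBasis ℝ E).repr.measurePreserving.measure_preimage
    measurableSet_ball.nullMeasurableSet]
  simp

theorem volume_ball_mul_le_rpow_mul_integral_orthogonal {v w : E} (hvw : v ≠ w) {β p : ℝ}
    (hβ : β ≤ 0) (hp : p ≤ 0) :
    (volume (ball (0 : (ℝ ∙ (v - w))ᗮ) 1)).toReal * exp (-1) *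
        ((1 + 2 * (‖v‖ ^ 2 + ‖w‖ ^ 2)) ^ (β / 2 + p) * exp (-(‖v‖ ^ 2 + ‖w‖ ^ 2) / 2)) ≤
      ‖v - w‖ ^ β * ∫ z : (ℝ ∙ (v - w))ᗮ,
        exp (-‖((ℝ ∙ (v - w))ᗮ.orthogonalProjectionOnto ((2 : ℝ)⁻¹ • (v + w)) : (ℝ ∙ (v - w))ᗮ)
          + z‖ ^ 2 / 2) * (‖z‖ ^ 2 + ‖v - w‖ ^ 2) ^ p := by
  have hr : 0 < ‖v - w‖ := norm_pos_iff.mpr (sub_ne_zero.mpr hvw)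
  have hpar := parallelogram_law_with_norm ℝ v w
  have hs : 0 ≤ ‖v‖ ^ 2 + ‖w‖ ^ 2 := by positivity
  set s := ‖v‖ ^ 2 + ‖w‖ ^ 2
  set H := (ℝ ∙ (v - w))ᗮ
  set c : H := H.orthogonalProjectionOnto ((2 : ℝ)⁻¹ • (v + w))
  have hc : (‖c‖ + 1) ^ 2 ≤ s + 2 := by
    have h : ‖c‖ ≤ 2⁻¹ * ‖v + w‖ := (H.norm_orthogonalProjectionOnto_apply_le _).trans_eq
      (norm_smul_of_nonneg (by norm_num) _)
    nlinarith [sq_nonneg (‖c‖ - 1), mul_self_le_mul_self (norm_nonneg c) h, sq_nonneg ‖v - w‖]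
  have hβpow : (1 + 2 * s) ^ (β / 2) ≤ ‖v - w‖ ^ β := by
    rw [show ‖v - w‖ ^ β = (‖v - w‖ ^ 2) ^ (β / 2) by
      rw [← rpow_natCast, ← rpow_mul (norm_nonneg _)]; push_cast; ring_nf]
    exact rpow_le_rpow_of_nonpos (by positivity) (by nlinarith) (by linarith)
  calc (volume (ball (0 : H) 1)).toReal * exp (-1) * ((1 + 2 * s) ^ (β / 2 + p) * exp (-s / 2))
      = (1 + 2 * s) ^ (β / 2) *
          ((volume (ball (0 : H) 1)).toReal * (exp (-(s + 2) / 2) * (1 + 2 * s) ^ p)) := by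
        rw [rpow_add (by linarith), show -(s + 2) / 2 = -s / 2 + -1 by ring, exp_add]; ring
    _ ≤ ‖v - w‖ ^ β * ((volume (ball (0 : H) 1)).toReal *
          (exp (-(‖c‖ + 1) ^ 2 / 2) * (1 + ‖v - w‖ ^ 2) ^ p)) := by
        gcongr ?_ * (_ * (?_ * ?_))
        · gcongr
        · exact rpow_le_rpow_of_nonpos (by positivity) (by nlinarith) hp
    _ ≤ _ := by
        gcongr
        exact volume_ball_mul_le_integral_exp_neg_norm_add_sq_mul_rpow c hr.ne' hp

end InnerProductSpace

theorem hyperplane_integral_lower_bound_general (d : ℕ) (hd : 2 ≤ d) (γ β : ℝ)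
    (hγu : γ ≤ 0) (hβ : β ≤ 0) :
    ∃ C : ℝ, 0 < C ∧ ∀ v w : Rd d, v ≠ w →
      C * Real.exp (-(‖v‖ ^ 2 + ‖w‖ ^ 2)) ≤
        ‖v - w‖ ^ β *
          ∫ z : (ℝ ∙ (v - w))ᗮ,
            Real.exp (-‖(Submodule.orthogonalProjectionOnto (ℝ ∙ (v - w))ᗮ ((2 : ℝ)⁻¹ • (v + w))
                  : (ℝ ∙ (v - w))ᗮ) + z‖ ^ 2 / 2)
              * (‖z‖ ^ 2 + ‖v - w‖ ^ 2) ^ ((γ - d + 2) / 2) := by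
  have hp : (γ - d + 2) / 2 ≤ 0 := by
    have : (2 : ℝ) ≤ d := by exact_mod_cast hd
    linarith
  obtain ⟨C₀, hC₀, hC₀le⟩ := Real.exists_mul_exp_neg_mul_le_rpow
    (add_nonpos (by linarith : β / 2 ≤ 0) hp) (by norm_num : (0 : ℝ) < 1 / 4)
  set κ := (volume (Metric.ball (0 : EuclideanSpace ℝ (Fin (d - 1))) 1)).toReal
  have hκ : 0 < κ :=
    ENNReal.toReal_pos (Metric.measure_ball_pos _ _ one_pos).ne' measure_ball_lt_top.ne
  refine ⟨κ * exp (-1) * C₀ * exp (-(1 / 4)), by positivity, fun v w hvw => ?_⟩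
  have hrank : Module.finrank ℝ (ℝ ∙ (v - w))ᗮ = d - 1 := by
    have h := (ℝ ∙ (v - w)).finrank_add_finrank_orthogonal
    rw [finrank_span_singleton (sub_ne_zero.mpr hvw), finrank_euclideanSpace_fin] at h
    omega
  have hI := volume_ball_mul_le_rpow_mul_integral_orthogonal hvw hβ hp
  rw [volume_ball_of_finrank_eq hrank] at hI
  refine le_trans ?_ hI
  set s := ‖v‖ ^ 2 + ‖w‖ ^ 2
  have hexp : exp (-(1 / 4)) * exp (-s) = exp (-(1 / 4 * (1 + 2 * s))) * exp (-s / 2) := by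
    simp only [← exp_add]; ring_nf
  calc κ * exp (-1) * C₀ * exp (-(1 / 4)) * exp (-s)
      = κ * exp (-1) * (C₀ * exp (-(1 / 4 * (1 + 2 * s))) * exp (-s / 2)) := by
        linear_combination (κ * exp (-1) * C₀) * hexp
    _ ≤ _ := by gcongr; exact hC₀le _ (by positivity)

/-- lower bound for the hyperplane integral `I(v,w)` when `b = 1`. -/
theorem hyperplane_integral_lower_bound (d : ℕ) (hd : 2 ≤ d) (γ β : ℝ)
    (hγl : -(d : ℝ) < γ) (hγu : γ ≤ 0) (hβ : β ≤ 0) :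
    ∃ C : ℝ, 0 < C ∧ ∀ v w : Rd d, v ≠ w →
      C * Real.exp (-(‖v‖ ^ 2 + ‖w‖ ^ 2)) ≤
        ‖v - w‖ ^ β *
          ∫ z : (ℝ ∙ (v - w))ᗮ,
            Real.exp (-‖(Submodule.orthogonalProjectionOnto (ℝ ∙ (v - w))ᗮ ((2 : ℝ)⁻¹ • (v + w))
                  : (ℝ ∙ (v - w))ᗮ) + z‖ ^ 2 / 2)
              * (‖z‖ ^ 2 + ‖v - w‖ ^ 2) ^ ((γ - d + 2) / 2) :=
  hyperplane_integral_lower_bound_general d hd γ β hγu hβ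
end
end

section
/- Fix an integer d ≥ 2, γ ∈ (-d, 0), a > 0 and q ≥ 1. For a nonnegative measurable f on ℝ^d with h = f/M, define Γ_{a,q}(f) = (1/2) ∫_{ℝ^d×ℝ^d×S^{d-1}} b(cos θ) exp(a|v-v_*|^q) M(v) M(v_*) (h(v)-h(v')) log(h(v)/h(v')) dσ dv_* dv. Then for every nonnegative measurable f with 0 < D_0(f) and Γ_{a,q}(f) < ∞, one has D_γ(f) ≥ (a^{|γ|/q}/2) · D_0(f) · ( log( 2 Γ_{a,q}(f) / D_0(f) ) )^{γ/q}. -/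
open MeasureTheory Real
open scoped ENNReal RealInnerProductSpace

noncomputable section

/-- The modified entropy production `Γ_{a,q}(f)` with stretched-exponential weight. -/
def GammaEnt (d : ℕ) (b : ℝ → ℝ) (a q : ℝ) (f : Rd d → ℝ) : ℝ≥0∞ :=
  2⁻¹ * ∫⁻ v : Rd d, ∫⁻ vs : Rd d, ∫⁻ σ : Metric.sphere (0 : Rd d) 1,
    ENNReal.ofReal (b (cosTheta d v vs σ) * Real.exp (a * ‖v - vs‖ ^ q)
      * Maxw d v * Maxw d vs *
      ((f v / Maxw d v - f (vpr d v vs σ) / Maxw d (vpr d v vs σ)) *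
        Real.log ((f v / Maxw d v) / (f (vpr d v vs σ) / Maxw d (vpr d v vs σ)))))
    ∂(sphereMeas d)


/-!
Write `R = |v - v_*|` and let `ν` be the measure `½ b(cos θ) M M (h' - h) log(h'/h) dσ dv_* dv`,
so that `D_α = ∫ R^α dν`, `D_0 = ν(univ)` and `Γ_{a,q} = ∫ exp(a R^q) dν`. For every `r > 0` one has
`1 ≤ r^{-γ} R^γ + exp(-a r^q) exp(a R^q)` (the first term is `≥ 1` where `R ≤ r`, the second where
`R ≥ r`), hence `D_0 ≤ r^{-γ} D_γ + exp(-a r^q) Γ_{a,q}`. Choosing `a r^q = log(2 Γ_{a,q} / D_0)`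
makes the last term `D_0 / 2`, and solving for `D_γ` gives the bound.
-/

section Interpolation

lemma one_le_rpow_mul_rpow_add_exp_mul_exp {γ a q r R : ℝ} (hγ : γ ≤ 0) (ha : 0 ≤ a)
    (hq : 0 ≤ q) (hr : 0 < r) (hR : 0 < R) :
    1 ≤ r ^ (-γ) * R ^ γ + exp (-(a * r ^ q)) * exp (a * R ^ q) := by
  have hpow : 0 ≤ r ^ (-γ) * R ^ γ := by positivity
  have hexp : 0 ≤ exp (-(a * r ^ q)) * exp (a * R ^ q) := by positivity
  rcases le_total R r with h | h
  · have : 1 ≤ r ^ (-γ) * R ^ γ := by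
      rw [rpow_neg hr.le, inv_mul_eq_div, ← div_rpow hR.le hr.le]
      exact one_le_rpow_of_pos_of_le_one_of_nonpos (div_pos hR hr) ((div_le_one hr).2 h) hγ
    linarith
  · have : a * r ^ q ≤ a * R ^ q := mul_le_mul_of_nonneg_left (rpow_le_rpow hr.le h hq) ha
    have : 1 ≤ exp (-(a * r ^ q)) * exp (a * R ^ q) := by
      rw [← exp_add]
      exact one_le_exp (by linarith)
    linarith

variable {X : Type*} [MeasurableSpace X]

lemma measure_univ_le_rpow_mul_lintegral_add_exp_mul_lintegral (ν : Measure X) {R : X → ℝ}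
    (hR : Measurable R) (hRpos : ∀ᵐ x ∂ν, 0 < R x) {γ a q r : ℝ} (hγ : γ ≤ 0) (ha : 0 ≤ a)
    (hq : 0 ≤ q) (hr : 0 < r) :
    ν Set.univ ≤ ENNReal.ofReal (r ^ (-γ)) * ∫⁻ x, ENNReal.ofReal (R x ^ γ) ∂ν
      + ENNReal.ofReal (exp (-(a * r ^ q))) * ∫⁻ x, ENNReal.ofReal (exp (a * R x ^ q)) ∂ν := by
  rw [← lintegral_const_mul _ (by fun_prop), ← lintegral_const_mul _ (by fun_prop),
    ← lintegral_add_left (by fun_prop), ← lintegral_one]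
  refine lintegral_mono_ae (hRpos.mono fun x hx => ?_)
  rw [← ENNReal.ofReal_mul (by positivity), ← ENNReal.ofReal_mul (by positivity),
    ← ENNReal.ofReal_add (by positivity) (by positivity), ← ENNReal.ofReal_one]
  exact ENNReal.ofReal_le_ofReal (one_le_rpow_mul_rpow_add_exp_mul_exp hγ ha hq hr hx)

lemma ofReal_mul_log_rpow_le_of_forall_le {N A G : ℝ≥0∞} {γ a q : ℝ} (hγ : γ < 0) (ha : 0 < a)
    (hq : 0 < q) (hN : 0 < N) (hNG : N ≤ G) (hG : G ≠ ⊤)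
    (h : ∀ r > 0, N ≤ ENNReal.ofReal (r ^ (-γ)) * A + ENNReal.ofReal (exp (-(a * r ^ q))) * G) :
    ENNReal.ofReal (a ^ (|γ| / q) / 2 * N.toReal * log (2 * G.toReal / N.toReal) ^ (γ / q))
      ≤ A := by
  have hNtop : N ≠ ⊤ := ne_top_of_le_ne_top hG hNG
  set n := N.toReal
  set g := G.toReal
  have hn : 0 < n := ENNReal.toReal_pos hN.ne' hNtop
  have hng : n ≤ g := ENNReal.toReal_mono hG hNG
  have hg : 0 < g := hn.trans_le hng
  set L := log (2 * g / n)
  have hL : 0 < L := log_pos (by rw [lt_div_iff₀ hn]; linarith)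
  set r := (L / a) ^ q⁻¹
  have hr : 0 < r := by positivity
  have hrq : a * r ^ q = L := by
    rw [← rpow_mul (div_pos hL ha).le, inv_mul_cancel₀ hq.ne', rpow_one]
    field_simp
  have hrγ : r ^ γ = a ^ (|γ| / q) * L ^ (γ / q) := by
    rw [← rpow_mul (div_pos hL ha).le, div_rpow hL.le ha.le, abs_of_neg hγ, neg_div,
      rpow_neg ha.le, inv_mul_eq_div, div_eq_inv_mul, div_eq_mul_inv γ]
  have hexp : ENNReal.ofReal (exp (-(a * r ^ q))) * G = ENNReal.ofReal (n / 2) := by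
    have hreal : exp (-(a * r ^ q)) * g = n / 2 := by
      rw [hrq, exp_neg, exp_log (by positivity)]
      field_simp
    rw [← hreal, ENNReal.ofReal_mul (exp_nonneg _), ENNReal.ofReal_toReal hG]
  have hhalf : ENNReal.ofReal (n / 2) ≤ ENNReal.ofReal (r ^ (-γ)) * A := by
    have hsplit : N = ENNReal.ofReal (n / 2) + ENNReal.ofReal (n / 2) := by
      rw [← ENNReal.ofReal_add (by positivity) (by positivity), add_halves,
        ENNReal.ofReal_toReal hNtop]
    have := h r hr
    rw [hsplit, hexp] at this
    exact (ENNReal.add_le_add_iff_right ENNReal.ofReal_ne_top).1 this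
  calc ENNReal.ofReal (a ^ (|γ| / q) / 2 * n * L ^ (γ / q))
      = ENNReal.ofReal (r ^ γ) * ENNReal.ofReal (n / 2) := by
        rw [← ENNReal.ofReal_mul (by positivity), hrγ]
        ring_nf
    _ ≤ ENNReal.ofReal (r ^ γ) * (ENNReal.ofReal (r ^ (-γ)) * A) := by gcongr
    _ = A := by
        rw [← mul_assoc, ← ENNReal.ofReal_mul (by positivity), ← rpow_add hr, add_neg_cancel,
          rpow_zero, ENNReal.ofReal_one, one_mul]

theorem ofReal_mul_log_rpow_le_lintegral_rpow (ν : Measure X) {R : X → ℝ} (hR : Measurable R)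
    (hRpos : ∀ᵐ x ∂ν, 0 < R x) {γ a q : ℝ} (hγ : γ < 0) (ha : 0 < a) (hq : 0 < q)
    (hN : 0 < ν Set.univ) (hG : ∫⁻ x, ENNReal.ofReal (exp (a * R x ^ q)) ∂ν < ⊤) :
    ENNReal.ofReal (a ^ (|γ| / q) / 2 * (ν Set.univ).toReal *
        log (2 * (∫⁻ x, ENNReal.ofReal (exp (a * R x ^ q)) ∂ν).toReal / (ν Set.univ).toReal) ^
          (γ / q))
      ≤ ∫⁻ x, ENNReal.ofReal (R x ^ γ) ∂ν := by
  have hNG : ν Set.univ ≤ ∫⁻ x, ENNReal.ofReal (exp (a * R x ^ q)) ∂ν := by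
    rw [← lintegral_one]
    refine lintegral_mono_ae (hRpos.mono fun x hx => ?_)
    rw [← ENNReal.ofReal_one]
    exact ENNReal.ofReal_le_ofReal (one_le_exp (by positivity))
  exact ofReal_mul_log_rpow_le_of_forall_le hγ ha hq hN hNG hG.ne fun r hr =>
    measure_univ_le_rpow_mul_lintegral_add_exp_mul_lintegral ν hR hRpos hγ.le ha.le hq.le hr

end Interpolation

instance (d : ℕ) : IsFiniteMeasure (sphereMeas d) := by
  unfold sphereMeas
  infer_instance

section EntropyMeasure

variable (d : ℕ) {b : ℝ → ℝ} {f : Rd d → ℝ}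

def collisionMeasure : Measure (Rd d × Rd d × Metric.sphere (0 : Rd d) 1) :=
  (volume : Measure (Rd d)).prod ((volume : Measure (Rd d)).prod (sphereMeas d))

lemma lintegral_collisionMeasure {F : Rd d × Rd d × Metric.sphere (0 : Rd d) 1 → ℝ≥0∞}
    (hF : Measurable F) :
    ∫⁻ p, F p ∂collisionMeasure d = ∫⁻ v, ∫⁻ vs, ∫⁻ σ, F (v, vs, σ) ∂sphereMeas d := by
  rw [collisionMeasure, lintegral_prod _ hF.aemeasurable]
  exact lintegral_congr fun v => lintegral_prod _ (hF.comp measurable_prodMk_left).aemeasurable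

def entropyDensity (b : ℝ → ℝ) (f : Rd d → ℝ) (v vs : Rd d) (σ : Metric.sphere (0 : Rd d) 1) :
    ℝ :=
  b (cosTheta d v vs σ) * Maxw d v * Maxw d vs *
    ((f (vpr d v vs σ) / Maxw d (vpr d v vs σ) - f v / Maxw d v) *
      log ((f (vpr d v vs σ) / Maxw d (vpr d v vs σ)) / (f v / Maxw d v)))

lemma entropyDensity_self (v : Rd d) (σ : Metric.sphere (0 : Rd d) 1) :
    entropyDensity d b f v v σ = 0 := by
  have hvpr : vpr d v v σ = v := by
    simp [vpr, ← two_smul ℝ v, smul_smul]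
  simp [entropyDensity, hvpr]

lemma measurable_entropyDensity (hb : Measurable b) (hf : Measurable f) :
    Measurable fun p : Rd d × Rd d × Metric.sphere (0 : Rd d) 1 =>
      entropyDensity d b f p.1 p.2.1 p.2.2 := by
  unfold entropyDensity vpr cosTheta Maxw
  fun_prop

def entropyMeasure (b : ℝ → ℝ) (f : Rd d → ℝ) :
    Measure (Rd d × Rd d × Metric.sphere (0 : Rd d) 1) :=
  (2⁻¹ : ℝ≥0∞) • (collisionMeasure d).withDensity fun p =>
    ENNReal.ofReal (entropyDensity d b f p.1 p.2.1 p.2.2)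

lemma lintegral_entropyMeasure (hb : Measurable b) (hf : Measurable f)
    {g : Rd d × Rd d × Metric.sphere (0 : Rd d) 1 → ℝ≥0∞} (hg : Measurable g) :
    ∫⁻ p, g p ∂entropyMeasure d b f = 2⁻¹ * ∫⁻ v, ∫⁻ vs, ∫⁻ σ,
      ENNReal.ofReal (entropyDensity d b f v vs σ) * g (v, vs, σ) ∂sphereMeas d := by
  have hρ := (measurable_entropyDensity d hb hf).ennreal_ofReal
  rw [entropyMeasure, lintegral_smul_measure, lintegral_withDensity_eq_lintegral_mul _ hρ hg,
    lintegral_collisionMeasure d (hρ.mul hg)]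
  rfl

lemma entProd_eq_lintegral (hb : Measurable b) (hf : Measurable f) (α : ℝ) :
    entProd d b α f = ∫⁻ p, ENNReal.ofReal (‖p.1 - p.2.1‖ ^ α) ∂entropyMeasure d b f := by
  rw [lintegral_entropyMeasure d hb hf (by fun_prop), entProd]
  congr 1
  refine lintegral_congr fun v => lintegral_congr fun vs => lintegral_congr fun σ => ?_
  rw [← ENNReal.ofReal_mul' (by positivity), entropyDensity]
  ring_nf

lemma GammaEnt_eq_lintegral (hb : Measurable b) (hf : Measurable f) (a q : ℝ) :
    GammaEnt d b a q f =
      ∫⁻ p, ENNReal.ofReal (exp (a * ‖p.1 - p.2.1‖ ^ q)) ∂entropyMeasure d b f := by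
  have hsymm (x y : ℝ) : (x - y) * log (x / y) = (y - x) * log (y / x) := by
    rw [← inv_div y x, log_inv]
    ring
  rw [lintegral_entropyMeasure d hb hf (by fun_prop), GammaEnt]
  congr 1
  refine lintegral_congr fun v => lintegral_congr fun vs => lintegral_congr fun σ => ?_
  rw [← ENNReal.ofReal_mul' (by positivity), entropyDensity, hsymm]
  ring_nf

-- The diagonal must be null because `0 ^ γ = 0` in Lean, not `∞`.
lemma ae_dist_pos_entropyMeasure (hb : Measurable b) (hf : Measurable f) :
    ∀ᵐ p ∂entropyMeasure d b f, 0 < ‖p.1 - p.2.1‖ := by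
  refine Measure.ae_smul_measure ((ae_withDensity_iff
    (measurable_entropyDensity d hb hf).ennreal_ofReal).2 (ae_of_all _ ?_)) _
  rintro ⟨v, vs, σ⟩ hρ
  have hne : v ≠ vs := by
    rintro rfl
    exact hρ (by simp [entropyDensity_self])
  exact norm_pos_iff.2 (sub_ne_zero.2 hne)

end EntropyMeasure

theorem entropy_production_log_interpolation_general (d : ℕ) (γ : ℝ)
    (hγu : γ < 0) (a q : ℝ) (ha : 0 < a) (hq : 1 ≤ q)
    (b : ℝ → ℝ) (hb : IsAngKernel d b)
    (f : Rd d → ℝ) (hfm : Measurable f)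
    (hD0 : 0 < entProd d b 0 f) (hGam : GammaEnt d b a q f < ⊤) :
    ENNReal.ofReal (a ^ (|γ| / q) / 2 * (entProd d b 0 f).toReal *
        Real.log (2 * (GammaEnt d b a q f).toReal / (entProd d b 0 f).toReal) ^ (γ / q))
      ≤ entProd d b γ f := by
  obtain ⟨hbm, -⟩ := hb
  have hD := entProd_eq_lintegral d hbm hfm
  have hD0_eq : entProd d b 0 f = entropyMeasure d b f Set.univ := by
    simp [hD]
  rw [GammaEnt_eq_lintegral d hbm hfm] at hGam ⊢
  rw [hD0_eq] at hD0 ⊢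
  rw [hD γ]
  exact ofReal_mul_log_rpow_le_lintegral_rpow _ (by fun_prop)
    (ae_dist_pos_entropyMeasure d hbm hfm) hγu ha (by linarith) hD0 hGam

/-- logarithmic interpolation between `D_γ`, `D_0` and `Γ_{a,q}`. -/
theorem entropy_production_log_interpolation (d : ℕ) (hd : 2 ≤ d) (γ : ℝ)
    (hγl : -(d : ℝ) < γ) (hγu : γ < 0) (a q : ℝ) (ha : 0 < a) (hq : 1 ≤ q)
    (b : ℝ → ℝ) (hb : IsAngKernel d b)
    (f : Rd d → ℝ) (hfm : Measurable f) (hfnn : ∀ v, 0 ≤ f v)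
    (hD0 : 0 < entProd d b 0 f) (hGam : GammaEnt d b a q f < ⊤) :
    ENNReal.ofReal (a ^ (|γ| / q) / 2 * (entProd d b 0 f).toReal *
        Real.log (2 * (GammaEnt d b a q f).toReal / (entProd d b 0 f).toReal) ^ (γ / q))
      ≤ entProd d b γ f :=
  entropy_production_log_interpolation_general d γ hγu a q ha hq b hb f hfm hD0 hGam
end
end
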